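/- Let h(t) be a real polynomial of degree s ≤ d with symmetric decomposition (p,q) with respect to d, let r ≥ 1 be an integer, and let (p̃, q̃) be the symmetric decomposition of U_r^{d+1}h(t) with respect to d. Then p̃(t) = (p(t)·(1+t+⋯+t^{r-1})^d)^{⟨r,0⟩} and t·q̃(t) = ((h(t)·(1+t+⋯+t^{r-1}) − p(t))·(1+t+⋯+t^{r-1})^d)^{⟨r,0⟩}. If furthermore r ≥ ℓ = d+1-s, then t·q̃(t) = (t^ℓ·w_r(t)·(1+t+⋯+t^{r-1})^d)^{⟨r,0⟩}, where w_r(t) is the unique real polynomial of degree at most r+s-ℓ-1 with w_{r,i} = w_{r,r+s-ℓ-1-i} for all i such that (1+t+⋯+t^{r-1})h(t) = p(t) + t^ℓ w_r(t). -/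

import Mathlib

open Polynomial

/-- The geometric polynomial `1 + t + ⋯ + t^{r-1}`. -/
noncomputable def geomPoly (r : ℕ) : ℝ[X] := ∑ j ∈ Finset.range r, X ^ j

/-- `sect r i f` is the polynomial `f^{⟨r,i⟩}` whose `n`-th coefficient is the `(r*n+i)`-th
coefficient of `f` (valid definition for `r ≥ 1`). -/
noncomputable def sect (r i : ℕ) (f : ℝ[X]) : ℝ[X] :=
  ∑ n ∈ Finset.range (f.natDegree + 1), C (f.coeff (r * n + i)) * X ^ n

/-- The operator `U_r^D h = (h·(1+t+⋯+t^{r-1})^D)^{⟨r,0⟩}`. -/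
noncomputable def Uop (r D : ℕ) (h : ℝ[X]) : ℝ[X] := sect r 0 (h * geomPoly r ^ D)

/-- `(p, q)` is the symmetric decomposition of `h` with respect to `d`. -/
def IsSymmDecomp (d : ℕ) (h p q : ℝ[X]) : Prop :=
  h = p + X * q ∧
  p.natDegree ≤ d ∧ (∀ i ≤ d, p.coeff i = p.coeff (d - i)) ∧
  q.natDegree ≤ d - 1 ∧ (∀ i ≤ d - 1, q.coeff i = q.coeff (d - 1 - i))

/-- A real polynomial is real-rooted if it is zero or all of its complex roots are real. -/
def RealRooted (f : ℝ[X]) : Prop :=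
  f = 0 ∨ ∀ z : ℂ, aeval z f = 0 → z.im = 0

/-- The real roots of `f`, with multiplicity, in weakly decreasing order. -/
noncomputable def descRoots (f : ℝ[X]) : List ℝ := (f.roots.sort (· ≤ ·)).reverse

/-- `Interlaces f g` means `f ⪯ g`: both are real-rooted and, unless one of them is zero,
the decreasingly ordered root lists `s` of `f` and `t` of `g` satisfy
`⋯ ≤ s_2 ≤ t_2 ≤ s_1 ≤ t_1` (with `deg g = deg f` or `deg f + 1`). -/
def Interlaces (f g : ℝ[X]) : Prop :=
  RealRooted f ∧ RealRooted g ∧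
  (f = 0 ∨ g = 0 ∨
    (((descRoots g).length = (descRoots f).length ∨
      (descRoots g).length = (descRoots f).length + 1) ∧
     (∀ i, (hf : i < (descRoots f).length) → (hg : i < (descRoots g).length) →
        (descRoots f).get ⟨i, hf⟩ ≤ (descRoots g).get ⟨i, hg⟩) ∧
     (∀ i, (hg : i + 1 < (descRoots g).length) → (hf : i < (descRoots f).length) →
        (descRoots g).get ⟨i + 1, hg⟩ ≤ (descRoots f).get ⟨i, hf⟩)))

/-- The coefficient of `h` at an integer index, zero for negative indices. -/
noncomputable def coeffZ (h : ℝ[X]) (j : ℤ) : ℝ := if 0 ≤ j then h.coeff j.toNat else 0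

/-- Property (H): `h_0 + ⋯ + h_i ≥ h_d + h_{d-1} + ⋯ + h_{d-i+1}` for all `i`. -/
def PropH (d : ℕ) (h : ℝ[X]) : Prop :=
  ∀ i : ℕ, ∑ j ∈ Finset.range i, coeffZ h ((d : ℤ) - j) ≤ ∑ j ∈ Finset.range (i + 1), h.coeff j

/-- Property (S): `h_0 + ⋯ + h_i ≤ h_s + h_{s-1} + ⋯ + h_{s-i}` for all `i`. -/
def PropS (s : ℕ) (h : ℝ[X]) : Prop :=
  ∀ i : ℕ, ∑ j ∈ Finset.range (i + 1), h.coeff j ≤ ∑ j ∈ Finset.range (i + 1), coeffZ h ((s : ℤ) - j)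

/-!
Call `f` a palindrome of degree `n` if `deg f ≤ n` and `t^n f(1/t) = f`. With
`g = 1 + t + ⋯ + t^{r-1}` we have `h g^{d+1} = p g^d + (h g - p) g^d`, and both summands are
palindromes, of degrees `r d` and `r (d + 1)`: for the second, `h g - p = p (g - 1) + t q g` is a
palindrome of degree `d + r`. Taking every `r`-th coefficient turns a palindrome of degree `r m`
into one of degree `m`, and the second summand has no constant term, so the two sections form a
symmetric decomposition of `U_r^{d+1} h`. Symmetric decompositions are unique, because a
polynomial that is a palindrome of both degrees `d` and `d + 1` is zero.
-/

namespace Polynomial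

variable {R : Type*}

def IsPalindromic [Semiring R] (n : ℕ) (f : R[X]) : Prop :=
  f.natDegree ≤ n ∧ f.reflect n = f

theorem isPalindromic_X [Semiring R] : IsPalindromic 2 (X : R[X]) :=
  ⟨natDegree_X_le.trans (by norm_num), by simpa using reflect_monomial (R := R) 2 1⟩

namespace IsPalindromic

section Semiring

variable [Semiring R] {m n : ℕ} {f g : R[X]}

theorem iff_coeff :
    IsPalindromic n f ↔ f.natDegree ≤ n ∧ ∀ i ≤ n, f.coeff i = f.coeff (n - i) := by
  refine and_congr_right fun _ => ⟨fun hf i hi => ?_, fun hf => ?_⟩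
  · conv_lhs => rw [← hf]
    rw [coeff_reflect, revAt_le hi]
  · ext i
    rw [coeff_reflect]
    rcases le_or_gt i n with hi | hi
    · rw [revAt_le hi, hf i hi]
    · rw [revAt_eq_self_of_lt hi]

theorem add (hf : IsPalindromic n f) (hg : IsPalindromic n g) : IsPalindromic n (f + g) :=
  ⟨natDegree_add_le_of_degree_le hf.1 hg.1, by rw [reflect_add, hf.2, hg.2]⟩

theorem mul (hf : IsPalindromic m f) (hg : IsPalindromic n g) :
    IsPalindromic (m + n) (f * g) :=
  ⟨natDegree_mul_le.trans (add_le_add hf.1 hg.1), by rw [reflect_mul f g hf.1 hg.1, hf.2, hg.2]⟩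

theorem pow (hf : IsPalindromic n f) (k : ℕ) : IsPalindromic (k * n) (f ^ k) := by
  induction k with
  | zero => simp [IsPalindromic]
  | succ k ih => simpa [pow_succ, add_mul] using ih.mul hf

theorem eq_zero_of_succ [Nontrivial R] (hn : IsPalindromic n f)
    (hn' : IsPalindromic (n + 1) f) : f = 0 := by
  have hfX : f = f * X := by
    -- reflecting in degree `n + 1` is reflecting in degree `n`, then multiplying by `X`
    have := reflect_mul f 1 hn.1 (natDegree_one.trans_le zero_le_one)
    rwa [mul_one, hn.2, hn'.2, reflect_one, pow_one] at this
  by_contra hf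
  have := congrArg natDegree hfX
  rw [natDegree_mul_X hf] at this
  omega

theorem X_mul_of_natDegree_le (hf : IsPalindromic (n - 1) f) (hXf : (X * f).natDegree ≤ n) :
    IsPalindromic (n + 1) (X * f) := by
  rcases n with _ | n
  · rw [eq_C_of_natDegree_le_zero hXf, coeff_X_mul_zero, C_0]
    simp [IsPalindromic]
  · have := isPalindromic_X.mul hf
    rwa [show 2 + (n + 1 - 1) = n + 1 + 1 by omega] at this

end Semiring

theorem sub [Ring R] {n : ℕ} {f g : R[X]} (hf : IsPalindromic n f) (hg : IsPalindromic n g) :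
    IsPalindromic n (f - g) :=
  ⟨(natDegree_sub_le f g).trans (max_le hf.1 hg.1), by rw [reflect_sub, hf.2, hg.2]⟩

end IsPalindromic

end Polynomial

theorem coeff_sect {r : ℕ} (hr : 1 ≤ r) (i : ℕ) (f : ℝ[X]) (m : ℕ) :
    (sect r i f).coeff m = f.coeff (r * m + i) := by
  rw [sect, finsetSum_coeff]
  simp only [coeff_C_mul, coeff_X_pow, mul_ite, mul_one, mul_zero, Finset.sum_ite_eq,
    Finset.mem_range]
  split_ifs with hm
  · rfl
  · have : m ≤ r * m := Nat.le_mul_of_pos_left m hr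
    exact (coeff_eq_zero_of_natDegree_lt (by omega)).symm

theorem sect_add {r : ℕ} (hr : 1 ≤ r) (i : ℕ) (f g : ℝ[X]) :
    sect r i (f + g) = sect r i f + sect r i g := by
  ext m
  simp only [coeff_add, coeff_sect hr]

theorem Polynomial.IsPalindromic.sect {r m : ℕ} (hr : 1 ≤ r) {f : ℝ[X]}
    (hf : IsPalindromic (r * m) f) : IsPalindromic m (sect r 0 f) := by
  rw [IsPalindromic.iff_coeff] at hf ⊢
  refine ⟨natDegree_le_iff_coeff_eq_zero.2 fun N hN => ?_, fun i hi => ?_⟩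
  · rw [coeff_sect hr]
    exact coeff_eq_zero_of_natDegree_lt (hf.1.trans_lt (by nlinarith))
  · rw [coeff_sect hr, coeff_sect hr, add_zero, add_zero, hf.2 _ (Nat.mul_le_mul_left r hi),
      Nat.mul_sub]

theorem coeff_geomPoly (r i : ℕ) : (geomPoly r).coeff i = if i < r then 1 else 0 := by
  simp [geomPoly, coeff_X_pow]

theorem isPalindromic_geomPoly (r : ℕ) : IsPalindromic (r - 1) (geomPoly r) := by
  rw [IsPalindromic.iff_coeff]
  refine ⟨natDegree_le_iff_coeff_eq_zero.2 fun N hN => ?_, fun i hi => ?_⟩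
  · rw [coeff_geomPoly, if_neg (by omega)]
  · simp only [coeff_geomPoly]
    split_ifs <;> first | rfl | omega

theorem isPalindromic_geomPoly_sub_one (r : ℕ) : IsPalindromic r (geomPoly r - 1) := by
  rw [IsPalindromic.iff_coeff]
  refine ⟨(natDegree_sub_le _ _).trans (max_le ((isPalindromic_geomPoly r).1.trans (by omega))
    (by simp)), fun i hi => ?_⟩
  simp only [coeff_sub, coeff_geomPoly, coeff_one]
  split_ifs <;> norm_num <;> omega

theorem isSymmDecomp_add_divX {d : ℕ} {P Q : ℝ[X]} (hP : IsPalindromic d P)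
    (hQ : IsPalindromic (d + 1) Q) (hQ0 : Q.coeff 0 = 0) :
    IsSymmDecomp d (P + Q) P Q.divX := by
  have hXQ : X * Q.divX = Q := by simpa [hQ0, mul_comm] using divX_mul_X_add Q
  rw [IsPalindromic.iff_coeff] at hP hQ
  refine ⟨by rw [hXQ], hP.1, hP.2, natDegree_le_iff_coeff_eq_zero.2 fun N hN => ?_,
    fun i hi => ?_⟩
  · rw [coeff_divX]
    rcases (show N + 1 = d + 1 ∨ d + 1 < N + 1 by omega) with h | h
    · rw [h, hQ.2 _ le_rfl, Nat.sub_self, hQ0]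
    · exact coeff_eq_zero_of_natDegree_lt (hQ.1.trans_lt h)
  · rcases Nat.eq_zero_or_pos d with rfl | hd
    · obtain rfl : i = 0 := by omega
      rfl
    · rw [coeff_divX, coeff_divX, hQ.2 (i + 1) (by omega)]
      congr 1
      omega

namespace IsSymmDecomp

variable {d : ℕ} {f p q : ℝ[X]}

theorem isPalindromic_fst (hpq : IsSymmDecomp d f p q) : IsPalindromic d p :=
  IsPalindromic.iff_coeff.2 ⟨hpq.2.1, hpq.2.2.1⟩

theorem isPalindromic_snd (hpq : IsSymmDecomp d f p q) : IsPalindromic (d - 1) q :=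
  IsPalindromic.iff_coeff.2 ⟨hpq.2.2.2.1, hpq.2.2.2.2⟩

theorem isPalindromic_X_mul_snd (hpq : IsSymmDecomp d f p q) (hf : f.natDegree ≤ d) :
    IsPalindromic (d + 1) (X * q) :=
  hpq.isPalindromic_snd.X_mul_of_natDegree_le <| by
    rw [show X * q = f - p by rw [hpq.1]; ring]
    exact (natDegree_sub_le f p).trans (max_le hf hpq.2.1)

theorem unique {p' q' : ℝ[X]} (hpq : IsSymmDecomp d f p q) (hpq' : IsSymmDecomp d f p' q') :
    p = p' ∧ q = q' := by
  have hX : p - p' = X * (q' - q) := by linear_combination hpq.1.symm.trans hpq'.1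
  have hu : IsPalindromic d (p - p') := hpq.isPalindromic_fst.sub hpq'.isPalindromic_fst
  have hXv : IsPalindromic (d + 1) (X * (q' - q)) :=
    (hpq'.isPalindromic_snd.sub hpq.isPalindromic_snd).X_mul_of_natDegree_le (hX ▸ hu.1)
  have hzero : p - p' = 0 := hu.eq_zero_of_succ (hX ▸ hXv)
  refine ⟨sub_eq_zero.1 hzero, (sub_eq_zero.1 ?_).symm⟩
  simpa [hzero] using hX.symm

theorem isPalindromic_mul_geomPoly_sub {r : ℕ} (hpq : IsSymmDecomp d f p q)
    (hf : f.natDegree ≤ d) (hr : 1 ≤ r) :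
    IsPalindromic (d + r) (f * geomPoly r - p) := by
  have hXqg := (hpq.isPalindromic_X_mul_snd hf).mul (isPalindromic_geomPoly r)
  rw [show d + 1 + (r - 1) = d + r by omega] at hXqg
  rw [show f * geomPoly r - p = p * (geomPoly r - 1) + X * q * geomPoly r by rw [hpq.1]; ring]
  exact (hpq.isPalindromic_fst.mul (isPalindromic_geomPoly_sub_one r)).add hXqg

theorem exists_isSymmDecomp_uop {r : ℕ} (hpq : IsSymmDecomp d f p q)
    (hf : f.natDegree ≤ d) (hr : 1 ≤ r) :
    ∃ q', IsSymmDecomp d (Uop r (d + 1) f) (sect r 0 (p * geomPoly r ^ d)) q' ∧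
      X * q' = sect r 0 ((f * geomPoly r - p) * geomPoly r ^ d) := by
  set Q := sect r 0 ((f * geomPoly r - p) * geomPoly r ^ d)
  obtain ⟨k, rfl⟩ := Nat.exists_eq_add_of_le' hr
  have hgd := (isPalindromic_geomPoly (k + 1)).pow d
  have hP : IsPalindromic d (sect (k + 1) 0 (p * geomPoly (k + 1) ^ d)) :=
    .sect hr (by convert hpq.isPalindromic_fst.mul hgd using 1; rw [Nat.add_sub_cancel]; ring)
  have hQ : IsPalindromic (d + 1) Q := .sect hr <| by
    convert (hpq.isPalindromic_mul_geomPoly_sub hf hr).mul hgd using 1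
    rw [Nat.add_sub_cancel]
    ring
  have hQ0 : Q.coeff 0 = 0 := by
    simp [Q, coeff_sect hr, mul_coeff_zero, coeff_geomPoly, hpq.1]
  have hU : Uop (k + 1) (d + 1) f = sect (k + 1) 0 (p * geomPoly (k + 1) ^ d) + Q := by
    rw [Uop, ← sect_add hr]
    ring_nf
  exact ⟨Q.divX, hU ▸ isSymmDecomp_add_divX hP hQ hQ0, by simpa [hQ0] using X_mul_divX_add Q⟩

end IsSymmDecomp

theorem statement3_general (d s : ℕ) (h : ℝ[X]) (hdeg : h.natDegree = s)
    (hsd : s ≤ d) (p q : ℝ[X]) (hpq : IsSymmDecomp d h p q)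
    (r : ℕ) (hr : 1 ≤ r)
    (pt qt : ℝ[X]) (hpqt : IsSymmDecomp d (Uop r (d + 1) h) pt qt) :
    pt = sect r 0 (p * geomPoly r ^ d) ∧
    X * qt = sect r 0 ((h * geomPoly r - p) * geomPoly r ^ d) ∧
    (d + 1 - s ≤ r → ∀ w : ℝ[X],
      (w.natDegree ≤ r + s - (d + 1 - s) - 1 ∧
       (∀ i ≤ r + s - (d + 1 - s) - 1,
          w.coeff i = w.coeff (r + s - (d + 1 - s) - 1 - i)) ∧
       geomPoly r * h = p + X ^ (d + 1 - s) * w) →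
      X * qt = sect r 0 (X ^ (d + 1 - s) * w * geomPoly r ^ d)) := by
  obtain ⟨q', hdecomp, hXq'⟩ := hpq.exists_isSymmDecomp_uop (hdeg ▸ hsd) hr
  obtain ⟨rfl, rfl⟩ := hpqt.unique hdecomp
  refine ⟨rfl, hXq', fun _ w hw => ?_⟩
  rw [hXq', show h * geomPoly r - p = X ^ (d + 1 - s) * w by linear_combination hw.2.2]

/-- Formulas for the symmetric decomposition `(p̃, q̃)` of `U_r^{d+1} h`
in terms of the symmetric decomposition `(p, q)` of `h`:
`p̃ = (p·(1+⋯+t^{r-1})^d)^{⟨r,0⟩}`, `t·q̃ = ((h·(1+⋯+t^{r-1}) − p)·(1+⋯+t^{r-1})^d)^{⟨r,0⟩}`,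
and if `r ≥ ℓ = d+1-s` then `t·q̃ = (t^ℓ·w_r·(1+⋯+t^{r-1})^d)^{⟨r,0⟩}` where `w_r` is the
unique symmetric (w.r.t. `r+s-ℓ-1`) polynomial with `(1+⋯+t^{r-1})·h = p + t^ℓ·w_r`. -/
theorem statement3 (d s : ℕ) (h : ℝ[X]) (hne : h ≠ 0) (hdeg : h.natDegree = s)
    (hsd : s ≤ d) (p q : ℝ[X]) (hpq : IsSymmDecomp d h p q)
    (r : ℕ) (hr : 1 ≤ r)
    (pt qt : ℝ[X]) (hpqt : IsSymmDecomp d (Uop r (d + 1) h) pt qt) :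
    pt = sect r 0 (p * geomPoly r ^ d) ∧
    X * qt = sect r 0 ((h * geomPoly r - p) * geomPoly r ^ d) ∧
    (d + 1 - s ≤ r → ∀ w : ℝ[X],
      (w.natDegree ≤ r + s - (d + 1 - s) - 1 ∧
       (∀ i ≤ r + s - (d + 1 - s) - 1,
          w.coeff i = w.coeff (r + s - (d + 1 - s) - 1 - i)) ∧
       geomPoly r * h = p + X ^ (d + 1 - s) * w) →
      X * qt = sect r 0 (X ^ (d + 1 - s) * w * geomPoly r ^ d)) :=
  statement3_general d s h hdeg hsd p q hpq r hr pt qt hpqt
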